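/- Let q be a prime, p a positive integer, and F = GF(q^p). Let k, u, w be nonnegative integers and let z_1, …, z_w ∈ F be points whose GF(q)-linear span has dimension ν, with ν ≤ u. Let M be any random variable taking values in F^k, let R be uniformly distributed on F^u, with M and R stochastically independent, and define E = (E_1,…,E_w) by E_i = ∑_{j=1}^{k} M_j z_i^{q^{j-1}} + ∑_{j=1}^{u} R_j z_i^{q^{k+j-1}}. Then the conditional entropy of the random padding given the eavesdropped symbols and the message satisfies H(R | (E,M)) = (u - ν)·p·log q. -/

import Mathlib

/-!
The pair `(E, M)` is an injective image of `(M, A R)`, where `A` is the matrix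
`(z_i ^ q ^ (k + j))`, and `(R, E, M)` one of `(M, R)`. By independence of `M` and `R` this gives
`H(R | E, M) = H(R) - H(A R)`, and as `R` is uniform, `A R` is uniform on the range of `A`, so
`H(R | E, M) = log |ker A| = (u - rank A) · p · log q`.

The rank of `A` is `ν` by Moore's lemma: if `x_1, …, x_n` are `GF(q)`-linearly independent and
`n ≤ u`, the vectors `(x_t ^ q ^ (k + j))_{j < u}` are linearly independent over any extension.
Normalising a relation so that one coefficient is `1`, the differences `b ^ q - b` of its
coefficients satisfy a relation with one row less; by induction all coefficients lie in `GF(q)`,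
and then the relation is the `q ^ k`-th power of a `GF(q)`-relation among the `x_t`.
-/

open scoped Classical

/-- Probability that the random variable `X` (on finite sample space `Ω` with
probability mass function `p`) takes the value `s`. -/
noncomputable def probOf {Ω S : Type*} [Fintype Ω] (p : Ω → ℝ) (X : Ω → S) (s : S) : ℝ :=
  ∑ ω ∈ Finset.univ.filter (fun ω => X ω = s), p ω

/-- Shannon entropy (natural logarithm) of the random variable `X`. Since
`Real.log 0 = 0`, the convention `0 · log 0 = 0` is automatic. -/
noncomputable def shannonEntropy {Ω S : Type*} [Fintype Ω] [Fintype S]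
    (p : Ω → ℝ) (X : Ω → S) : ℝ :=
  -∑ s : S, probOf p X s * Real.log (probOf p X s)

/-- Conditional entropy `H(X | Y) = H(X, Y) - H(Y)`. -/
noncomputable def condEntropyRV {Ω S T : Type*} [Fintype Ω] [Fintype S] [Fintype T]
    (p : Ω → ℝ) (X : Ω → S) (Y : Ω → T) : ℝ :=
  shannonEntropy p (fun ω => (X ω, Y ω)) - shannonEntropy p Y

/-- Mutual information `I(X; Y) = H(X) + H(Y) - H(X, Y)`. -/
noncomputable def mutualInfoRV {Ω S T : Type*} [Fintype Ω] [Fintype S] [Fintype T]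
    (p : Ω → ℝ) (X : Ω → S) (Y : Ω → T) : ℝ :=
  shannonEntropy p X + shannonEntropy p Y - shannonEntropy p (fun ω => (X ω, Y ω))

/-- `X` and `Y` are stochastically independent random variables. -/
def IndepRV {Ω S T : Type*} [Fintype Ω] (p : Ω → ℝ) (X : Ω → S) (Y : Ω → T) : Prop :=
  ∀ s t, probOf p (fun ω => (X ω, Y ω)) (s, t) = probOf p X s * probOf p Y t
open Finset

section Entropy

variable {Ω S T : Type*} [Fintype Ω] (pr : Ω → ℝ)

lemma probOf_comp [Fintype S] (X : Ω → S) (f : S → T) (t : T) :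
    probOf pr (fun ω => f (X ω)) t = ∑ s with f s = t, probOf pr X s := by
  simp only [probOf, sum_filter, ite_sum_zero]
  rw [sum_comm]
  refine sum_congr rfl fun ω _ => ?_
  rw [Fintype.sum_eq_single (X ω) fun s hs => by simp [Ne.symm hs]]
  simp

lemma sum_probOf [Fintype S] (X : Ω → S) : ∑ s, probOf pr X s = ∑ ω, pr ω := by
  simpa [probOf] using (probOf_comp pr X (fun _ => ()) ()).symm

lemma probOf_comp_of_injective (X : Ω → S) {g : S → T} (hg : g.Injective) (s : S) :
    probOf pr (fun ω => g (X ω)) (g s) = probOf pr X s := by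
  simp only [probOf, hg.eq_iff]

lemma probOf_eq_zero_of_notMem_range (X : Ω → S) {t : S} (ht : t ∉ Set.range X) :
    probOf pr X t = 0 := by
  rw [probOf, filter_false_of_mem fun ω _ hω => ht ⟨ω, hω⟩, sum_empty]

lemma shannonEntropy_comp_of_injective [Fintype S] [Fintype T] (X : Ω → S) {g : S → T}
    (hg : g.Injective) : shannonEntropy pr (fun ω => g (X ω)) = shannonEntropy pr X := by
  unfold shannonEntropy
  congr 1
  rw [← sum_subset (subset_univ (univ.map ⟨g, hg⟩)), sum_map]
  · exact sum_congr rfl fun s _ => by simp only [Function.Embedding.coeFn_mk,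
      probOf_comp_of_injective pr X hg]
  · intro t _ ht
    rw [probOf_eq_zero_of_notMem_range pr _ fun ⟨ω, hω⟩ => ht (by simp [← hω]), zero_mul]

lemma shannonEntropy_pair_of_indep [Fintype S] [Fintype T] (hsum : ∑ ω, pr ω = 1)
    (X : Ω → S) (Y : Ω → T) (h : IndepRV pr X Y) :
    shannonEntropy pr (fun ω => (X ω, Y ω)) = shannonEntropy pr X + shannonEntropy pr Y := by
  have hX : ∑ s, probOf pr X s = 1 := by rw [sum_probOf, hsum]
  have hY : ∑ t, probOf pr Y t = 1 := by rw [sum_probOf, hsum]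
  have mul_log_mul (a b : ℝ) :
      a * b * Real.log (a * b) = a * (b * Real.log b) + b * (a * Real.log a) := by
    rcases eq_or_ne a 0 with rfl | ha
    · simp
    rcases eq_or_ne b 0 with rfl | hb
    · simp
    rw [Real.log_mul ha hb]
    ring
  have h' : ∀ s t, probOf pr (fun ω => (X ω, Y ω)) (s, t) = probOf pr X s * probOf pr Y t := h
  simp only [shannonEntropy, Fintype.sum_prod_type, h', mul_log_mul, sum_add_distrib,
    ← mul_sum, ← sum_mul, hX, hY]
  ring

lemma IndepRV.comp_right {T' : Type*} {X : Ω → S} {Y : Ω → T} [Fintype S] [Fintype T]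
    (h : IndepRV pr X Y) (f : T → T') : IndepRV pr X (fun ω => f (Y ω)) := by
  intro s t
  rw [probOf_comp pr (fun ω => (X ω, Y ω)) (fun st => (st.1, f st.2)), probOf_comp pr Y f]
  simp only [sum_filter, Fintype.sum_prod_type, Prod.mk.injEq, ite_and, ← ite_sum_zero,
    sum_ite_eq', mem_univ, if_true, mul_sum]
  exact sum_congr rfl fun b _ => by split_ifs <;> simp [h s b]

lemma shannonEntropy_of_uniform [Fintype S] (X : Ω → S)
    (hX : ∀ s, probOf pr X s = 1 / (Fintype.card S : ℝ)) :
    shannonEntropy pr X = Real.log (Fintype.card S) := by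
  simp only [shannonEntropy, hX, sum_const, card_univ, nsmul_eq_mul, one_div, Real.log_inv]
  rcases (Fintype.card S).eq_zero_or_pos with h | h
  · simp [h]
  · field_simp

lemma probOf_comp_of_uniform [Fintype S] (X : Ω → S)
    (hX : ∀ s, probOf pr X s = 1 / (Fintype.card S : ℝ)) (f : S → T) (t : T) :
    probOf pr (fun ω => f (X ω)) t = Nat.card (f ⁻¹' {t}) / (Fintype.card S : ℝ) := by
  rw [probOf_comp, sum_congr rfl fun s _ => hX s, sum_const, nsmul_eq_mul, mul_one_div,
    Nat.card_eq_card_toFinset]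
  congr 3
  ext
  simp

lemma AddMonoidHom.natCard_ker_mul_natCard_range {G H : Type*} [AddGroup G] [AddGroup H]
    (φ : G →+ H) : Nat.card φ.ker * Nat.card φ.range = Nat.card G := by
  rw [← AddSubgroup.index_ker, AddSubgroup.card_mul_index]

lemma shannonEntropy_addMonoidHom_of_uniform {G H : Type*} [AddGroup G] [Fintype G] [AddGroup H]
    [Fintype H] (X : Ω → G) (hX : ∀ g, probOf pr X g = 1 / (Fintype.card G : ℝ))
    (φ : G →+ H) : shannonEntropy pr (fun ω => φ (X ω)) = Real.log (Nat.card φ.range) := by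
  simp_rw [← φ.coe_rangeRestrict]
  rw [shannonEntropy_comp_of_injective pr _ Subtype.val_injective,
    shannonEntropy_of_uniform pr _ fun t => ?_, Nat.card_eq_fintype_card]
  rw [probOf_comp_of_uniform pr X hX, Nat.card_congr (φ.rangeRestrict.fiberEquivKerOfSurjective
    φ.rangeRestrict_surjective t), φ.ker_rangeRestrict,
    ← Nat.card_eq_fintype_card (α := G), ← φ.natCard_ker_mul_natCard_range,
    Nat.card_eq_fintype_card (α := φ.range)]
  have : (0 : ℝ) < Nat.card φ.ker := by exact_mod_cast Nat.card_pos
  push_cast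
  field_simp

theorem condEntropyRV_eq_log_card_ker {A G H : Type*} [Fintype A] [AddGroup G] [Fintype G]
    [AddGroup H] [Fintype H] (hsum : ∑ ω, pr ω = 1)
    (M : Ω → A) (R : Ω → G) (hMR : IndepRV pr M R)
    (hR : ∀ g, probOf pr R g = 1 / (Fintype.card G : ℝ)) (φ : G →+ H) (f : A → H) (E : Ω → H)
    (hE : ∀ ω, E ω = f (M ω) + φ (R ω)) :
    condEntropyRV pr R (fun ω => (E ω, M ω)) = Real.log (Nat.card φ.ker) := by
  have hjoint : shannonEntropy pr (fun ω => (R ω, (E ω, M ω)))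
      = shannonEntropy pr M + shannonEntropy pr R := by
    have hg : (fun mr : A × G => (mr.2, (f mr.1 + φ mr.2, mr.1))).Injective :=
      fun _ _ h => Prod.ext (congrArg (·.2.2) h) (congrArg Prod.fst h)
    rw [← shannonEntropy_pair_of_indep pr hsum M R hMR, ← shannonEntropy_comp_of_injective pr _ hg]
    simp only [hE]
  have hobserved : shannonEntropy pr (fun ω => (E ω, M ω))
      = shannonEntropy pr M + shannonEntropy pr (fun ω => φ (R ω)) := by
    have hg : (fun mh : A × H => (f mh.1 + mh.2, mh.1)).Injective := by
      rintro ⟨m, h⟩ ⟨m', h'⟩ heq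
      simp only [Prod.mk.injEq] at heq ⊢
      obtain ⟨heq, rfl⟩ := heq
      exact ⟨rfl, add_left_cancel heq⟩
    rw [← shannonEntropy_pair_of_indep pr hsum M _ (hMR.comp_right pr φ),
      ← shannonEntropy_comp_of_injective pr _ hg]
    simp only [hE]
  have hcard : (Nat.card φ.ker : ℝ) * Nat.card φ.range = Fintype.card G := by
    exact_mod_cast φ.natCard_ker_mul_natCard_range.trans Nat.card_eq_fintype_card
  have hker : (Nat.card φ.ker : ℝ) ≠ 0 := by exact_mod_cast Nat.card_pos.ne'
  have hrange : (Nat.card φ.range : ℝ) ≠ 0 := by exact_mod_cast Nat.card_pos.ne'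
  rw [condEntropyRV, hjoint, hobserved, shannonEntropy_of_uniform pr R hR,
    shannonEntropy_addMonoidHom_of_uniform pr R hR, ← hcard, Real.log_mul hker hrange]
  ring

end Entropy

lemma Submodule.span_image_eq_of_span_eq {K L M N : Type*} [CommSemiring K] [Semiring L]
    [AddCommMonoid M] [AddCommMonoid N] [Module K M] [Module K N] [Module L N] [SMul K L]
    [IsScalarTower K L N] (ψ : M →ₗ[K] N) {s t : Set M} (h : span K s = span K t) :
    span L (ψ '' s) = span L (ψ '' t) := by
  rw [← span_span_of_tower K, ← map_span, h, map_span, span_span_of_tower]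

section Frobenius

variable {q : ℕ} [Fact q.Prime] {L : Type*} [Field L] [Algebra (ZMod q) L]

lemma mem_range_algebraMap_of_pow_eq_self {b : L} (hb : b ^ q = b) :
    b ∈ (algebraMap (ZMod q) L).range :=
  (GaloisField.splits_zmod_X_pow_sub_X q).mem_range_of_isRoot
    (FiniteField.X_pow_card_sub_X_ne_zero _ (Fact.out : q.Prime).one_lt) (by simp [hb])

lemma smul_pow_char_pow (c : ZMod q) (v : L) (n : ℕ) : (c • v) ^ q ^ n = c • v ^ q ^ n := by
  rw [Algebra.smul_def, Algebra.smul_def, mul_pow, ← map_pow, ZMod.pow_card_pow]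

lemma sum_mul_pow_char_pow_sub_eq_zero {ι : Type*} {s : Finset ι} {b x : ι → L} {k : ℕ}
    (h₀ : ∑ t ∈ s, b t * x t ^ q ^ k = 0) (h₁ : ∑ t ∈ s, b t * x t ^ q ^ (k + 1) = 0) :
    ∑ t ∈ s, (b t ^ q - b t) * x t ^ q ^ (k + 1) = 0 := by
  have := charP_of_injective_algebraMap (algebraMap (ZMod q) L).injective q
  have hpow : ∑ t ∈ s, b t ^ q * x t ^ q ^ (k + 1) = (∑ t ∈ s, b t * x t ^ q ^ k) ^ q := by
    rw [sum_pow_char]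
    exact Finset.sum_congr rfl fun t _ => by rw [mul_pow, ← pow_mul, ← pow_succ]
  simp only [sub_mul, Finset.sum_sub_distrib, hpow, h₀, h₁,
    zero_pow (Fact.out : q.Prime).ne_zero, sub_zero]

lemma LinearIndepOn.eq_zero_of_sum_mul_pow_char_pow_eq_zero {ι : Type*} {s : Finset ι}
    {x b : ι → L} (hx : LinearIndepOn (ZMod q) x s) (hb : ∀ t ∈ s, b t ^ q = b t) {k : ℕ}
    (h : ∑ t ∈ s, b t * x t ^ q ^ k = 0) : ∀ t ∈ s, b t = 0 := by
  have := charP_of_injective_algebraMap (algebraMap (ZMod q) L).injective q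
  have hrat (t : ι) : ∃ c : ZMod q, t ∈ s → algebraMap (ZMod q) L c = b t := by
    by_cases ht : t ∈ s
    · obtain ⟨c, hc⟩ := mem_range_algebraMap_of_pow_eq_self (hb t ht)
      exact ⟨c, fun _ => hc⟩
    · exact ⟨0, fun h => absurd h ht⟩
  choose d hd using hrat
  have hdep : ∑ t ∈ s, d t • x t = 0 := by
    refine (pow_eq_zero_iff (pow_ne_zero k (Fact.out : q.Prime).ne_zero)).mp ?_
    rw [sum_pow_char_pow, ← h]
    exact Finset.sum_congr rfl fun t ht => by rw [smul_pow_char_pow, Algebra.smul_def, hd t ht]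
  intro t ht
  rw [← hd t ht, linearIndepOn_finset_iff.mp hx d hdep t ht, map_zero]

variable (q L) in
def frobeniusRow (k u : ℕ) : L →ₗ[ZMod q] Fin u → L where
  toFun v j := v ^ q ^ (k + j)
  map_add' v w := by
    have := charP_of_injective_algebraMap (algebraMap (ZMod q) L).injective q
    funext j
    exact add_pow_char_pow v w q _
  map_smul' c v := funext fun j => smul_pow_char_pow c v _

@[simp]
lemma frobeniusRow_apply (k u : ℕ) (v : L) (j : Fin u) :
    frobeniusRow q L k u v j = v ^ q ^ (k + j) := rfl

theorem linearIndepOn_frobeniusRow {ι : Type*} {x : ι → L} {u : ℕ} {s : Finset ι}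
    (hx : LinearIndepOn (ZMod q) x s) (hs : s.card ≤ u) (k : ℕ) :
    LinearIndepOn L (fun t => frobeniusRow q L k u (x t)) s := by
  induction u generalizing k s with
  | zero => simp [Finset.card_eq_zero.mp (Nat.le_zero.mp hs)]
  | succ u ih =>
    refine linearIndepOn_finset_iff.mpr fun a ha t₀ ht₀ => ?_
    by_contra hne
    set b := fun t => a t / a t₀
    have hb₀ : b t₀ = 1 := div_self hne
    have hb (j : ℕ) (hj : j < u + 1) : ∑ t ∈ s, b t * x t ^ q ^ (k + j) = 0 := by
      have := congrFun ha ⟨j, hj⟩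
      simp only [Finset.sum_apply, Pi.smul_apply, frobeniusRow_apply, smul_eq_mul,
        Pi.zero_apply] at this
      simp only [b, div_mul_eq_mul_div, ← Finset.sum_div, this, zero_div]
    -- `b ^ q - b` solves the system of one equation less, shifted by one Frobenius twist
    have hfixed (t : ι) (ht : t ∈ s) : b t ^ q = b t := by
      rcases eq_or_ne t t₀ with rfl | htne
      · rw [hb₀, one_pow]
      have hsub := ih (s := s.erase t₀) (k := k + 1)
        (hx.mono (Finset.coe_subset.mpr (Finset.erase_subset t₀ s)))
        (by rw [Finset.card_erase_of_mem ht₀]; omega)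
      refine sub_eq_zero.mp (linearIndepOn_finset_iff.mp hsub (fun t => b t ^ q - b t) ?_ t
        (Finset.mem_erase.mpr ⟨htne, ht⟩))
      funext j
      simp only [Finset.sum_apply, Pi.smul_apply, frobeniusRow_apply, smul_eq_mul, Pi.zero_apply]
      rw [Finset.sum_erase s (by simp [hb₀]), add_right_comm]
      exact sum_mul_pow_char_pow_sub_eq_zero (hb j (by omega)) (hb (j + 1) (by omega))
    exact one_ne_zero (hb₀.symm.trans
      (hx.eq_zero_of_sum_mul_pow_char_pow_eq_zero hfixed (hb 0 (by omega)) t₀ ht₀))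

theorem rank_of_frobeniusRow {ι : Type*} [Fintype ι] (z : ι → L) {k u : ℕ}
    (hu : Module.finrank (ZMod q) (Submodule.span (ZMod q) (Set.range z)) ≤ u) :
    (Matrix.of fun i => frobeniusRow q L k u (z i)).rank
      = Module.finrank (ZMod q) (Submodule.span (ZMod q) (Set.range z)) := by
  obtain ⟨b, hbz, hspan, hb⟩ := exists_linearIndependent (ZMod q) (Set.range z)
  have : Fintype b := ((Set.finite_range z).subset hbz).fintype
  rw [← Subtype.range_coe (s := b)] at hspan
  rw [← hspan, finrank_span_eq_card hb] at hu ⊢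
  have hrows : LinearIndependent L (frobeniusRow q L k u ∘ Subtype.val (p := (· ∈ b))) := by
    rw [← linearIndepOn_univ_iff, ← Finset.coe_univ]
    exact linearIndepOn_frobeniusRow (by rwa [Finset.coe_univ, linearIndepOn_univ_iff])
      (by rwa [Finset.card_univ]) k
  rw [Matrix.rank_eq_finrank_span_row]
  change Module.finrank L (Submodule.span L (Set.range (frobeniusRow q L k u ∘ z))) = _
  rw [Set.range_comp, Submodule.span_image_eq_of_span_eq _ hspan.symm, ← Set.range_comp,
    finrank_span_eq_card hrows]

end Frobenius

theorem Matrix.natCard_ker_mulVecLin {F m n : Type*} [Field F] [Fintype F] [Fintype n]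
    (A : Matrix m n F) :
    Nat.card (LinearMap.ker A.mulVecLin) = Fintype.card F ^ (Fintype.card n - A.rank) := by
  have h := LinearMap.finrank_range_add_finrank_ker A.mulVecLin
  rw [Module.finrank_fintype_fun_eq_card] at h
  rw [Module.natCard_eq_pow_finrank (K := F), Nat.card_eq_fintype_card, Matrix.rank]
  congr
  omega

theorem secure_RFC_conditional_entropy_general
    (q p k u w ν : ℕ) [Fact q.Prime] (hp : 0 < p)
    [Fintype (GaloisField q p)]
    {Ω : Type*} [Fintype Ω]
    (pr : Ω → ℝ) (hsum : ∑ ω : Ω, pr ω = 1)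
    (z : Fin w → GaloisField q p)
    (hν : Module.finrank (ZMod q) (Submodule.span (ZMod q) (Set.range z)) = ν)
    (hνu : ν ≤ u)
    (M : Ω → Fin k → GaloisField q p)
    (R : Ω → Fin u → GaloisField q p)
    (hMR : IndepRV pr M R)
    (hR : ∀ v : Fin u → GaloisField q p,
        probOf pr R v = 1 / (Fintype.card (Fin u → GaloisField q p) : ℝ))
    (E : Ω → Fin w → GaloisField q p)
    (hE : ∀ ω (i : Fin w),
        E ω i = ∑ j : Fin k, M ω j * z i ^ q ^ (j : ℕ)
              + ∑ j : Fin u, R ω j * z i ^ q ^ (k + (j : ℕ))) :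
    condEntropyRV pr R (fun ω => (E ω, M ω)) =
      ((u - ν : ℕ) : ℝ) * (p : ℝ) * Real.log (q : ℝ) := by
  set A := Matrix.of fun i => frobeniusRow q (GaloisField q p) k u (z i)
  set f := fun (m : Fin k → GaloisField q p) i => ∑ j : Fin k, m j * z i ^ q ^ (j : ℕ)
  have hE' (ω : Ω) : E ω = f (M ω) + A.mulVecLin.toAddMonoidHom (R ω) := by
    funext i
    simp [hE, f, A, Matrix.mulVec, dotProduct, mul_comm]
  have hker : Nat.card A.mulVecLin.toAddMonoidHom.ker = (q ^ p) ^ (u - ν) := by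
    rw [← LinearMap.ker_toAddSubgroup]
    change Nat.card (LinearMap.ker A.mulVecLin) = _
    rw [Matrix.natCard_ker_mulVecLin, rank_of_frobeniusRow z (hν ▸ hνu), hν, Fintype.card_fin,
      ← Nat.card_eq_fintype_card, GaloisField.card q p hp.ne']
  rw [condEntropyRV_eq_log_card_ker pr hsum M R hMR hR _ f E hE', hker]
  push_cast
  rw [Real.log_pow, Real.log_pow]
  ring

/-- with `F = GF(q^p)`, evaluation points `z_1, …, z_w` whose
`GF(q)`-linear span has dimension `ν ≤ u`, message `M` with values in `F^k`,
padding `R` uniform on `F^u` independent of `M`, and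
`E_i = ∑_{j=1}^{k} M_j z_i^{q^{j-1}} + ∑_{j=1}^{u} R_j z_i^{q^{k+j-1}}`,
the conditional entropy of the padding given the eavesdropped symbols and the
message is `H(R | (E, M)) = (u - ν) · p · log q`. -/
theorem secure_RFC_conditional_entropy
    (q p k u w ν : ℕ) [Fact q.Prime] (hp : 0 < p)
    [Fintype (GaloisField q p)]
    {Ω : Type*} [Fintype Ω]
    (pr : Ω → ℝ) (hpr : ∀ ω, 0 ≤ pr ω) (hsum : ∑ ω : Ω, pr ω = 1)
    (z : Fin w → GaloisField q p)
    (hν : Module.finrank (ZMod q) (Submodule.span (ZMod q) (Set.range z)) = ν)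
    (hνu : ν ≤ u)
    (M : Ω → Fin k → GaloisField q p)
    (R : Ω → Fin u → GaloisField q p)
    (hMR : IndepRV pr M R)
    (hR : ∀ v : Fin u → GaloisField q p,
        probOf pr R v = 1 / (Fintype.card (Fin u → GaloisField q p) : ℝ))
    (E : Ω → Fin w → GaloisField q p)
    (hE : ∀ ω (i : Fin w),
        E ω i = ∑ j : Fin k, M ω j * z i ^ q ^ (j : ℕ)
              + ∑ j : Fin u, R ω j * z i ^ q ^ (k + (j : ℕ))) :
    condEntropyRV pr R (fun ω => (E ω, M ω)) =
      ((u - ν : ℕ) : ℝ) * (p : ℝ) * Real.log (q : ℝ) :=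
  secure_RFC_conditional_entropy_general q p k u w ν hp pr hsum z hν hνu M R hMR hR E hE
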